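/- Let l : 2^V → ℝ be submodular and increasing with l(∅) = 0 and l(A) ≥ 0 for all A ⊆ V. Then for every s ∈ [0,1]^p, the slack-rescaling surrogate is dominated by the Lovász extension: S_l(s) ≤ ℓ̂(s). Moreover the Lovász hinge coincides with the Lovász extension on the unit cube, so the Lovász hinge has equal or higher value than slack rescaling inside the unit cube. -/

import Mathlib

open Finset

/-- The chain {σ₁,…,σⱼ}: the image under σ of the first j indices. -/
def chainSet {p : ℕ} (σ : Equiv.Perm (Fin p)) (j : ℕ) : Finset (Fin p) :=
  (Finset.univ.filter fun k : Fin p => (k : ℕ) < j).image σ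

/-- G_l(σ, s) = Σ_{j=1}^p s_{σ_j}·(l({σ₁,…,σⱼ}) − l({σ₁,…,σ_{j−1}})). -/
def lovaszSum {p : ℕ} (l : Finset (Fin p) → ℝ) (σ : Equiv.Perm (Fin p))
    (s : Fin p → ℝ) : ℝ :=
  ∑ j : Fin p, s (σ j) * (l (chainSet σ ((j : ℕ) + 1)) - l (chainSet σ (j : ℕ)))

/-- Indicator vector 1_A ∈ {0,1}^p of A ⊆ V. -/
def indic {p : ℕ} (A : Finset (Fin p)) : Fin p → ℝ := fun i => if i ∈ A then 1 else 0

/-- A permutation sorting s in decreasing order: s_{π_1} ≥ … ≥ s_{π_p}. -/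
def SortsDesc {p : ℕ} (π : Equiv.Perm (Fin p)) (s : Fin p → ℝ) : Prop :=
  ∀ j k : Fin p, j ≤ k → s (π k) ≤ s (π j)

/-- A canonical permutation sorting s in decreasing order. -/
noncomputable def sortDesc {p : ℕ} (s : Fin p → ℝ) : Equiv.Perm (Fin p) :=
  Tuple.sort (fun i => -s i)

/-- The Lovász extension ℓ̂(s) = G_l(π, s) for a permutation π sorting s
decreasingly (independent of the choice of such π). -/
noncomputable def lovaszExt {p : ℕ} (l : Finset (Fin p) → ℝ) (s : Fin p → ℝ) : ℝ :=
  lovaszSum l (sortDesc s) s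

/-- Submodularity: l(A) + l(B) ≥ l(A ∪ B) + l(A ∩ B). -/
def Submodular {p : ℕ} (l : Finset (Fin p) → ℝ) : Prop :=
  ∀ A B : Finset (Fin p), l (A ∪ B) + l (A ∩ B) ≤ l A + l B

/-- The slack-rescaling surrogate S_l(s) = max_{I⊆V} l(I)·(1 − 2 Σ_{i∈I}(1 − s_i)). -/
noncomputable def slackSur {p : ℕ} (l : Finset (Fin p) → ℝ) (s : Fin p → ℝ) : ℝ :=
  Finset.univ.sup' Finset.univ_nonempty
    (fun I : Finset (Fin p) => l I * (1 - 2 * ∑ i ∈ I, (1 - s i)))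

/-- The margin-rescaling surrogate M_l(s) = max_{I⊆V} ( l(I) − 2 Σ_{i∈I}(1 − s_i) ). -/
noncomputable def marginSur {p : ℕ} (l : Finset (Fin p) → ℝ) (s : Fin p → ℝ) : ℝ :=
  Finset.univ.sup' Finset.univ_nonempty
    (fun I : Finset (Fin p) => l I - 2 * ∑ i ∈ I, (1 - s i))

/-- The Lovász hinge, general (non-monotonic) case. -/
noncomputable def hingeGen {p : ℕ} (l : Finset (Fin p) → ℝ) (s : Fin p → ℝ) : ℝ :=
  Finset.univ.sup' Finset.univ_nonempty
    (fun σ : Equiv.Perm (Fin p) => max 0 (lovaszSum l σ s))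

/-- The Lovász hinge, increasing case (componentwise thresholding). -/
noncomputable def hingeInc {p : ℕ} (l : Finset (Fin p) → ℝ) (s : Fin p → ℝ) : ℝ :=
  Finset.univ.sup' Finset.univ_nonempty
    (fun σ : Equiv.Perm (Fin p) =>
      ∑ j : Fin p, max (s (σ j)) 0 *
        (l (chainSet σ ((j : ℕ) + 1)) - l (chainSet σ (j : ℕ))))



/-!
The value `lovaszSum l σ s` is the inner product of `s` with the greedy vector `g_σ` of
marginal gains along the chain of `σ`. Submodularity gives `∑_{i ∈ A} g_σ i ≤ l A` for every
`A`, with equality on the chain of `σ`; Abel summation along a decreasing ordering of `s` then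
shows that a sorting permutation maximises `⟪s, g_σ⟫` (Edmonds' greedy theorem). For `s ≥ 0`
the thresholding in the hinge is inactive, so the hinge is this maximum, i.e. the Lovász
extension.

For the slack bound at `I`, take `σ` listing `I` first. Since `0 ≤ g_σ i ≤ l {i} ≤ l I`,
`⟪s, g_σ⟫ ≥ ∑_{i ∈ I} s i g_σ i = l I - ∑_{i ∈ I} (1 - s i) g_σ i
  ≥ l I (1 - ∑_{i ∈ I} (1 - s i))`,
which dominates `l I (1 - 2 ∑_{i ∈ I} (1 - s i))` because `l I ≥ 0`.
-/
namespace Submodular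

variable {p : ℕ} {l : Finset (Fin p) → ℝ}

theorem insert_sub_le_insert_sub (hl : Submodular l) {a : Fin p} {B C : Finset (Fin p)}
    (hBC : B ⊆ C) (ha : a ∉ C) :
    l (insert a C) - l C ≤ l (insert a B) - l B := by
  have hunion : insert a B ∪ C = insert a C := by
    rw [insert_union, union_eq_right.mpr hBC]
  have hinter : insert a B ∩ C = B := by
    rw [insert_inter_of_notMem ha, inter_eq_left.mpr hBC]
  have := hl (insert a B) C
  rw [hunion, hinter] at this
  linarith

end Submodular

section Chain

variable {p : ℕ}

theorem mem_chainSet {σ : Equiv.Perm (Fin p)} {j : ℕ} {i : Fin p} :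
    i ∈ chainSet σ j ↔ (σ.symm i : ℕ) < j := by
  simp only [chainSet, mem_image, mem_filter, mem_univ, true_and]
  exact ⟨fun ⟨k, hk, hki⟩ => by rwa [← hki, Equiv.symm_apply_apply],
    fun h => ⟨σ.symm i, h, σ.apply_symm_apply i⟩⟩

@[simp]
theorem chainSet_zero (σ : Equiv.Perm (Fin p)) : chainSet σ 0 = ∅ := by
  ext i; simp [mem_chainSet]

theorem chainSet_eq_univ (σ : Equiv.Perm (Fin p)) {m : ℕ} (hm : p ≤ m) :
    chainSet σ m = univ :=
  eq_univ_of_forall fun i => mem_chainSet.mpr ((σ.symm i).isLt.trans_le hm)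

theorem chainSet_succ (σ : Equiv.Perm (Fin p)) (j : Fin p) :
    chainSet σ (j + 1) = insert (σ j) (chainSet σ j) := by
  ext i
  rw [mem_insert, mem_chainSet, mem_chainSet, Nat.lt_succ_iff_lt_or_eq, ← Fin.ext_iff,
    Equiv.symm_apply_eq, or_comm]

theorem apply_notMem_chainSet (σ : Equiv.Perm (Fin p)) (j : Fin p) :
    σ j ∉ chainSet σ j := by
  simp [mem_chainSet]

theorem card_chainSet (σ : Equiv.Perm (Fin p)) {m : ℕ} (hm : m ≤ p) :
    #(chainSet σ m) = m := by
  rw [chainSet, card_image_of_injective _ σ.injective, Fin.card_filter_val_lt,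
    min_eq_right hm]

theorem SortsDesc.symm_lt_symm {π : Equiv.Perm (Fin p)} {s : Fin p → ℝ} (hπ : SortsDesc π s)
    {i j : Fin p} (hij : s j < s i) : π.symm i < π.symm j := by
  by_contra! h
  have := hπ _ _ h
  simp only [Equiv.apply_symm_apply] at this
  linarith

theorem sortsDesc_sortDesc (s : Fin p → ℝ) : SortsDesc (sortDesc s) s := by
  intro j k hjk
  simpa [sortDesc] using Tuple.monotone_sort (fun i => -s i) hjk

theorem SortsDesc.chainSet_card_eq {π : Equiv.Perm (Fin p)} {I : Finset (Fin p)}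
    (hπ : SortsDesc π (indic I)) : chainSet π #I = I := by
  have hcard : #(chainSet π #I) = #I := card_chainSet π (by simpa using card_le_univ I)
  refine eq_of_subset_of_card_le (fun x hx => ?_) hcard.ge
  by_contra hxI
  have hsub : insert x I ⊆ chainSet π #I := by
    refine insert_subset hx fun i hi => ?_
    have hlt : π.symm i < π.symm x := hπ.symm_lt_symm (by simp [indic, hi, hxI])
    exact mem_chainSet.mpr ((Fin.lt_def.mp hlt).trans (mem_chainSet.mp hx))
  have := card_le_card hsub
  rw [card_insert_of_notMem hxI, hcard] at this
  omega

end Chain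

section Greedy

variable {p : ℕ} {l : Finset (Fin p) → ℝ}

/-- The vertex of the base polytope of `l` produced by the greedy algorithm along `σ`. -/
def greedyVec (l : Finset (Fin p) → ℝ) (σ : Equiv.Perm (Fin p)) (i : Fin p) : ℝ :=
  l (insert i (chainSet σ (σ.symm i))) - l (chainSet σ (σ.symm i))

theorem greedyVec_apply (σ : Equiv.Perm (Fin p)) (j : Fin p) :
    greedyVec l σ (σ j) = l (chainSet σ (j + 1)) - l (chainSet σ j) := by
  rw [greedyVec, Equiv.symm_apply_apply, chainSet_succ]

theorem lovaszSum_eq_sum_mul_greedyVec (σ : Equiv.Perm (Fin p)) (s : Fin p → ℝ) :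
    lovaszSum l σ s = ∑ i, s i * greedyVec l σ i := by
  rw [lovaszSum, ← Equiv.sum_comp σ (fun i => s i * greedyVec l σ i)]
  simp only [greedyVec_apply]

theorem greedyVec_nonneg (hmono : ∀ A B : Finset (Fin p), A ⊆ B → l A ≤ l B)
    (σ : Equiv.Perm (Fin p)) (i : Fin p) : 0 ≤ greedyVec l σ i :=
  sub_nonneg.mpr (hmono _ _ (subset_insert _ _))

theorem greedyVec_le_singleton (hl : Submodular l) (h0 : l ∅ = 0) (σ : Equiv.Perm (Fin p))
    (i : Fin p) : greedyVec l σ i ≤ l {i} := by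
  have := hl.insert_sub_le_insert_sub (empty_subset (chainSet σ (σ.symm i)))
    (apply_notMem_chainSet σ (σ.symm i))
  rwa [Equiv.apply_symm_apply, insert_empty, h0, sub_zero] at this

theorem sum_greedyVec_chainSet (h0 : l ∅ = 0) (σ : Equiv.Perm (Fin p)) (m : ℕ) :
    ∑ i ∈ chainSet σ m, greedyVec l σ i = l (chainSet σ m) := by
  induction m with
  | zero => simp [h0]
  | succ m ih =>
    by_cases hm : m < p
    · have hsucc := chainSet_succ σ ⟨m, hm⟩
      rw [hsucc, sum_insert (apply_notMem_chainSet σ ⟨m, hm⟩), ih, greedyVec_apply, hsucc]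
      ring
    · rw [chainSet_eq_univ σ (by omega : p ≤ m + 1), ← chainSet_eq_univ σ (by omega : p ≤ m),
        ih]

theorem sum_greedyVec_le (hl : Submodular l) (h0 : l ∅ = 0) (σ : Equiv.Perm (Fin p))
    (A : Finset (Fin p)) : ∑ i ∈ A, greedyVec l σ i ≤ l A := by
  induction A using induction_on_max_value σ.symm with
  | empty => simp [h0]
  | insert a A ha hmax ih =>
    -- `A` lies before `a` in the order of `σ`, so submodularity bounds the gain of `a`.
    have hA : A ⊆ chainSet σ (σ.symm a) := fun x hx =>
      mem_chainSet.mpr <| lt_of_le_of_ne (hmax x hx) fun h =>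
        ha (σ.symm.injective (Fin.ext h) ▸ hx)
    have hgain : greedyVec l σ a ≤ l (insert a A) - l A := by
      have := hl.insert_sub_le_insert_sub hA (apply_notMem_chainSet σ (σ.symm a))
      rwa [Equiv.apply_symm_apply] at this
    rw [sum_insert ha]
    linarith

theorem sum_greedyVec_univ (h0 : l ∅ = 0) (σ : Equiv.Perm (Fin p)) :
    ∑ i, greedyVec l σ i = l univ := by
  rw [← chainSet_eq_univ σ le_rfl, sum_greedyVec_chainSet h0]

end Greedy

section Sorted

variable {p : ℕ} {π : Equiv.Perm (Fin p)} {s : Fin p → ℝ}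

/-- Abel summation along a sorting permutation. -/
theorem SortsDesc.mul_sum_chainSet_le (hπ : SortsDesc π s) {z : Fin p → ℝ}
    (hz : ∀ k ≤ p, 0 ≤ ∑ i ∈ chainSet π k, z i) {k : ℕ} (hk : k ≤ p) {t : ℝ}
    (ht : ∀ j : Fin p, (j : ℕ) < k → t ≤ s (π j)) :
    t * ∑ i ∈ chainSet π k, z i ≤ ∑ i ∈ chainSet π k, s i * z i := by
  induction k generalizing t with
  | zero => simp
  | succ k ih =>
    set j : Fin p := ⟨k, hk⟩
    have hzk := hz (k + 1) hk
    have hnotMem := apply_notMem_chainSet π j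
    rw [show k + 1 = (j : ℕ) + 1 from rfl, chainSet_succ, sum_insert hnotMem] at hzk
    rw [show k + 1 = (j : ℕ) + 1 from rfl, chainSet_succ, sum_insert hnotMem, sum_insert hnotMem]
    have hIH : s (π j) * ∑ i ∈ chainSet π j, z i ≤ ∑ i ∈ chainSet π j, s i * z i :=
      ih (by omega) fun i hi => hπ i j (Fin.le_def.mpr hi.le)
    have htj : t ≤ s (π j) := ht j (Nat.lt_succ_self k)
    nlinarith [mul_nonneg (sub_nonneg.mpr htj) hzk]

theorem SortsDesc.sum_mul_nonneg (hπ : SortsDesc π s) {z : Fin p → ℝ}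
    (hz : ∀ k ≤ p, 0 ≤ ∑ i ∈ chainSet π k, z i) (hsum : ∑ i, z i = 0) :
    0 ≤ ∑ i, s i * z i := by
  obtain ⟨t, ht⟩ := (Set.finite_range s).bddBelow
  have := hπ.mul_sum_chainSet_le hz le_rfl (t := t) fun j _ => ht ⟨π j, rfl⟩
  rwa [chainSet_eq_univ π le_rfl, hsum, mul_zero] at this

theorem SortsDesc.lovaszSum_le {l : Finset (Fin p) → ℝ} (hl : Submodular l) (h0 : l ∅ = 0)
    (hπ : SortsDesc π s) (σ : Equiv.Perm (Fin p)) :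
    lovaszSum l σ s ≤ lovaszSum l π s := by
  simp only [lovaszSum_eq_sum_mul_greedyVec]
  have := hπ.sum_mul_nonneg (z := fun i => greedyVec l π i - greedyVec l σ i)
    (fun k _ => by
      rw [sum_sub_distrib, sum_greedyVec_chainSet h0, sub_nonneg]
      exact sum_greedyVec_le hl h0 σ _)
    (by rw [sum_sub_distrib, sum_greedyVec_univ h0, sum_greedyVec_univ h0, sub_self])
  simpa only [mul_sub, sum_sub_distrib, sub_nonneg] using this

end Sorted

section Surrogates

variable {p : ℕ} {l : Finset (Fin p) → ℝ}

theorem lovaszSum_le_lovaszExt (hl : Submodular l) (h0 : l ∅ = 0) (s : Fin p → ℝ)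
    (σ : Equiv.Perm (Fin p)) : lovaszSum l σ s ≤ lovaszExt l s :=
  (sortsDesc_sortDesc s).lovaszSum_le hl h0 σ

theorem hingeInc_eq_lovaszExt (hl : Submodular l) (h0 : l ∅ = 0) {s : Fin p → ℝ}
    (hs : 0 ≤ s) : hingeInc l s = lovaszExt l s := by
  have hterm : ∀ σ : Equiv.Perm (Fin p), ∑ j : Fin p, max (s (σ j)) 0 *
      (l (chainSet σ (j + 1)) - l (chainSet σ j)) = lovaszSum l σ s := fun σ =>
    sum_congr rfl fun j _ => by rw [max_eq_left (show (0 : ℝ) ≤ s (σ j) from hs (σ j))]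
  simp only [hingeInc, hterm]
  exact le_antisymm (sup'_le _ _ fun σ _ => lovaszSum_le_lovaszExt hl h0 s σ)
    (le_sup' (fun σ => lovaszSum l σ s) (mem_univ (sortDesc s)))

theorem mul_one_sub_sum_le_lovaszSum (hl : Submodular l)
    (hmono : ∀ A B : Finset (Fin p), A ⊆ B → l A ≤ l B) (h0 : l ∅ = 0)
    {s : Fin p → ℝ} (hs : s ∈ Set.Icc 0 1) {I : Finset (Fin p)} {σ : Equiv.Perm (Fin p)}
    (hσ : chainSet σ #I = I) :
    l I * (1 - ∑ i ∈ I, (1 - s i)) ≤ lovaszSum l σ s := by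
  have hs0 : ∀ i, 0 ≤ s i := hs.1
  have hs1 : ∀ i, s i ≤ 1 := hs.2
  have hgain : ∀ i ∈ I, greedyVec l σ i ≤ l I := fun i hi =>
    (greedyVec_le_singleton hl h0 σ i).trans (hmono _ _ (singleton_subset_iff.mpr hi))
  have hchain : ∑ i ∈ I, greedyVec l σ i = l I := by
    rw [← hσ, sum_greedyVec_chainSet h0, hσ]
  calc l I * (1 - ∑ i ∈ I, (1 - s i))
      = l I - ∑ i ∈ I, (1 - s i) * l I := by rw [← sum_mul]; ring
    _ ≤ ∑ i ∈ I, greedyVec l σ i - ∑ i ∈ I, (1 - s i) * greedyVec l σ i := by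
        rw [hchain]
        gcongr with i hi
        · linarith [hs1 i]
        · exact hgain i hi
    _ = ∑ i ∈ I, s i * greedyVec l σ i := by
        rw [← sum_sub_distrib]; exact sum_congr rfl fun i _ => by ring
    _ ≤ lovaszSum l σ s := by
        rw [lovaszSum_eq_sum_mul_greedyVec]
        exact sum_le_sum_of_subset_of_nonneg (subset_univ I)
          fun i _ _ => mul_nonneg (hs0 i) (greedyVec_nonneg hmono σ i)

theorem slackSur_le_lovaszExt (hl : Submodular l)
    (hmono : ∀ A B : Finset (Fin p), A ⊆ B → l A ≤ l B) (h0 : l ∅ = 0)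
    {s : Fin p → ℝ} (hs : s ∈ Set.Icc 0 1) : slackSur l s ≤ lovaszExt l s := by
  refine sup'_le _ _ fun I _ => ?_
  have hlI : 0 ≤ l I := h0 ▸ hmono _ _ (empty_subset I)
  have hslack : 0 ≤ ∑ i ∈ I, (1 - s i) := sum_nonneg fun i _ => sub_nonneg.mpr (hs.2 i)
  calc l I * (1 - 2 * ∑ i ∈ I, (1 - s i))
      ≤ l I * (1 - ∑ i ∈ I, (1 - s i)) := by gcongr; linarith
    _ ≤ lovaszSum l (sortDesc (indic I)) s := mul_one_sub_sum_le_lovaszSum hl hmono h0 hs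
        (sortsDesc_sortDesc (indic I)).chainSet_card_eq
    _ ≤ lovaszExt l s := lovaszSum_le_lovaszExt hl h0 s _

end Surrogates

theorem slack_le_lovasz_on_cube_general (p : ℕ)
    (l : Finset (Fin p) → ℝ) (hsub : Submodular l)
    (hinc : ∀ A B : Finset (Fin p), A ⊆ B → l A ≤ l B) (h0 : l ∅ = 0) :
    ∀ s ∈ Set.Icc (0 : Fin p → ℝ) 1,
      slackSur l s ≤ lovaszExt l s ∧
      hingeInc l s = lovaszExt l s ∧
      slackSur l s ≤ hingeInc l s := by
  intro s hs
  have hslack := slackSur_le_lovaszExt hsub hinc h0 hs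
  have hhinge := hingeInc_eq_lovaszExt hsub h0 hs.1
  exact ⟨hslack, hhinge, hhinge ▸ hslack⟩

/-- inside the unit cube the slack-rescaling surrogate is
dominated by the Lovász extension, the Lovász hinge coincides with the Lovász
extension there, and hence the Lovász hinge dominates slack rescaling. -/
theorem slack_le_lovasz_on_cube (p : ℕ) (hp : 1 ≤ p)
    (l : Finset (Fin p) → ℝ) (hsub : Submodular l)
    (hinc : ∀ A B : Finset (Fin p), A ⊆ B → l A ≤ l B) (h0 : l ∅ = 0)
    (hnn : ∀ A : Finset (Fin p), 0 ≤ l A) :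
    ∀ s ∈ Set.Icc (0 : Fin p → ℝ) 1,
      slackSur l s ≤ lovaszExt l s ∧
      hingeInc l s = lovaszExt l s ∧
      slackSur l s ≤ hingeInc l s :=
  slack_le_lovasz_on_cube_general p l hsub hinc h0
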